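/- Let G be a finite abelian group with |G| = m and let A ⊆ G. If R_A(g) ≤ 5 for all g ∈ G, then the number of elements g ∈ G with R_A(g) = 2 satisfies |S_2| ≤ (1/2)m + 3√(5m). -/

import Mathlib

/-!
Write `r = repFn A` and `d x` for the number of pairs in `A × A` with difference `x`. Both
`∑ r g ^ 2` and `∑ d x ^ 2` count the solutions of `a + b = a' + b'` in `A`, and since `d` is
integer-valued with `d 0 = #A`, the bound `(d x - 1) (d x - 2) ≥ 0` gives
`∑ r g ^ 2 ≥ 4 #A ^ 2 - 3 #A - 2 m + 2`. On the other hand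
`4 [r = 2] + r ^ 2 ≤ 4 r + 5 [r odd]` for `r ≤ 5`, and `r g` is odd only when `g = a + a` with
`a ∈ A` (the swap pairs off all other representations), so `r` is odd at most `#A` times.
Summing over `G` and using `∑ r g = #A ^ 2` gives `4 |S₂| + 2 ≤ 2 m + 8 #A`, while
`#A ^ 2 = ∑ r g ≤ 5 m`.
-/

/-- `repFn A g` is the number of ordered pairs `(a, a') ∈ A × A` with `a + a' = g`. -/
def repFn {G : Type*} [AddCommGroup G] [DecidableEq G] (A : Finset G) (g : G) : ℕ :=
  ((A ×ˢ A).filter fun p => p.1 + p.2 = g).card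

open Finset

namespace Finset

variable {ι κ : Type*}

lemma even_card_of_involution {s : Finset ι} (σ : ι → ι) (hσ : ∀ x ∈ s, σ x ∈ s)
    (hσσ : ∀ x ∈ s, σ (σ x) = x) (hfix : ∀ x ∈ s, σ x ≠ x) : Even #s := by
  rw [← ZMod.natCast_eq_zero_iff_even, card_eq_sum_ones, Nat.cast_sum, Nat.cast_one]
  exact sum_involution (fun x _ => σ x) (fun _ _ => by decide) (fun x hx _ => hfix x hx) hσ hσσ

lemma sum_sq_card_fiber [DecidableEq κ] [Fintype κ] (s : Finset ι) (f : ι → κ) :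
    ∑ y, #{x ∈ s | f x = y} ^ 2 = #{xx ∈ s ×ˢ s | f xx.1 = f xx.2} := by
  rw [card_eq_sum_card_fiberwise (f := fun xx : ι × ι => f xx.1) (t := univ)
    fun _ _ => mem_univ _]
  refine sum_congr rfl fun y _ => ?_
  rw [sq, ← card_product, filter_filter]
  congr 1
  ext ⟨x, x'⟩
  simp only [mem_product, mem_filter]
  grind

end Finset

lemma Int.sub_one_mul_sub_two_nonneg (n : ℤ) : 0 ≤ (n - 1) * (n - 2) := by
  rcases le_or_gt n 1 with hn | hn
  · exact mul_nonneg_of_nonpos_of_nonpos (by linarith) (by linarith)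
  · exact mul_nonneg (by linarith) (by linarith)

lemma four_mul_ite_add_sq_le {r : ℕ} (hr : r ≤ 5) :
    4 * (if r = 2 then 1 else 0) + r ^ 2 ≤ 4 * r + 5 * (if Odd r then 1 else 0) := by
  interval_cases r <;> decide

section RepresentationFunction

variable {G : Type*} [AddCommGroup G] [DecidableEq G] (A : Finset G)

def subRepFn (x : G) : ℕ := #{p ∈ A ×ˢ A | p.1 - p.2 = x}

lemma subRepFn_zero : subRepFn A 0 = #A := by
  rw [subRepFn, ← diag_card A, diag_eq_filter]
  simp only [sub_eq_zero]

lemma exists_add_self_eq_of_odd_repFn {g : G} (hg : Odd (repFn A g)) : ∃ a ∈ A, a + a = g := by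
  by_contra! h
  refine Nat.not_even_iff_odd.2 hg (even_card_of_involution Prod.swap ?_ ?_ ?_)
  · intro p hp
    simp only [mem_filter, mem_product] at hp ⊢
    exact ⟨⟨hp.1.2, hp.1.1⟩, add_comm p.2 p.1 ▸ hp.2⟩
  · intro p _
    rfl
  · rintro ⟨a, b⟩ hp hab
    obtain rfl : b = a := congrArg Prod.fst hab
    simp only [mem_filter, mem_product] at hp
    exact h b hp.1.1 hp.2

variable [Fintype G]

lemma card_odd_repFn_le : #{g | Odd (repFn A g)} ≤ #A := by
  refine (card_le_card fun g hg => ?_).trans (card_image_le (f := fun a => a + a))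
  obtain ⟨a, ha, rfl⟩ := exists_add_self_eq_of_odd_repFn A (mem_filter.1 hg).2
  exact mem_image_of_mem _ ha

lemma sum_repFn : ∑ g, repFn A g = #A ^ 2 := by
  rw [sq, ← card_product,
    card_eq_sum_card_fiberwise (f := fun p : G × G => p.1 + p.2) fun _ _ => mem_univ _]
  rfl

lemma sum_subRepFn : ∑ x, subRepFn A x = #A ^ 2 := by
  rw [sq, ← card_product,
    card_eq_sum_card_fiberwise (f := fun p : G × G => p.1 - p.2) fun _ _ => mem_univ _]
  rfl

lemma sum_sq_repFn_eq_sum_sq_subRepFn :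
    ∑ g, repFn A g ^ 2 = ∑ x, subRepFn A x ^ 2 := by
  simp only [repFn, subRepFn]
  rw [sum_sq_card_fiber (A ×ˢ A) (fun p => p.1 + p.2),
    sum_sq_card_fiber (A ×ˢ A) (fun p => p.1 - p.2)]
  -- `((a, b), (c, d)) ↦ ((a, d), (c, b))`, since `a + b = c + d ↔ a - d = c - b`
  refine card_nbij' (fun q => ((q.1.1, q.2.2), (q.2.1, q.1.2)))
    (fun q => ((q.1.1, q.2.2), (q.2.1, q.1.2))) ?_ ?_ (fun _ _ => rfl) (fun _ _ => rfl)
  · rintro ⟨⟨a, b⟩, c, d⟩ hq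
    simp only [coe_filter, mem_product, Set.mem_ofPred_eq] at hq ⊢
    exact ⟨⟨⟨hq.1.1.1, hq.1.2.2⟩, hq.1.2.1, hq.1.1.2⟩,
      sub_eq_sub_iff_add_eq_add.2 (by rw [hq.2, add_comm])⟩
  · rintro ⟨⟨a, b⟩, c, d⟩ hq
    simp only [coe_filter, mem_product, Set.mem_ofPred_eq] at hq ⊢
    exact ⟨⟨⟨hq.1.1.1, hq.1.2.2⟩, hq.1.2.1, hq.1.1.2⟩,
      by rw [sub_eq_sub_iff_add_eq_add.1 hq.2, add_comm]⟩

lemma four_mul_card_sq_add_two_le_sum_sq_subRepFn :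
    (4 * #A ^ 2 + 2 : ℤ) ≤ ∑ x, (subRepFn A x : ℤ) ^ 2 + 3 * #A + 2 * Fintype.card G := by
  -- every term is a nonnegative integer, and the one at `x = 0` is `(#A - 1) * (#A - 2)`
  have hzero :
      ((#A : ℤ) - 1) * (#A - 2) ≤ ∑ x, ((subRepFn A x : ℤ) - 1) * (subRepFn A x - 2) := by
    rw [← subRepFn_zero A]
    exact single_le_sum (fun x _ => Int.sub_one_mul_sub_two_nonneg _) (mem_univ 0)
  have hsum : ∑ x, (subRepFn A x : ℤ) = #A ^ 2 := by exact_mod_cast sum_subRepFn A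
  have hexpand : ∑ x, ((subRepFn A x : ℤ) - 1) * (subRepFn A x - 2)
      = ∑ x, (subRepFn A x : ℤ) ^ 2 - 3 * ∑ x, (subRepFn A x : ℤ) + 2 * Fintype.card G := by
    simp_rw [show ∀ n : ℤ, (n - 1) * (n - 2) = n ^ 2 - 3 * n + 2 by intro n; ring]
    rw [sum_add_distrib, sum_sub_distrib, ← mul_sum, sum_const, card_univ, nsmul_eq_mul]
    ring
  linarith

lemma card_sq_le_of_repFn_le {c : ℕ} (h : ∀ g, repFn A g ≤ c) :
    #A ^ 2 ≤ c * Fintype.card G := by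
  rw [← sum_repFn]
  simpa [mul_comm] using sum_le_sum fun g (_ : g ∈ univ) => h g

lemma four_mul_card_repFn_eq_two_add_two_le (h : ∀ g, repFn A g ≤ 5) :
    4 * #{g | repFn A g = 2} + 2 ≤ 2 * Fintype.card G + 8 * #A := by
  have hpoint : 4 * #{g | repFn A g = 2} + ∑ g, repFn A g ^ 2
      ≤ 4 * #A ^ 2 + 5 * #{g | Odd (repFn A g)} := by
    simpa only [card_filter, ← mul_sum, sum_add_distrib, sum_repFn] using
      sum_le_sum fun g (_ : g ∈ univ) => four_mul_ite_add_sq_le (h g)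
  have henergy := four_mul_card_sq_add_two_le_sum_sq_subRepFn A
  have hodd := card_odd_repFn_le A
  rw [sum_sq_repFn_eq_sum_sq_subRepFn] at hpoint
  zify at hpoint hodd ⊢
  linarith

end RepresentationFunction

theorem stmt_3 {G : Type*} [AddCommGroup G] [Fintype G] [DecidableEq G]
    (m : ℕ) (hm : Fintype.card G = m) (A : Finset G)
    (h : ∀ g : G, repFn A g ≤ 5) :
    (((Finset.univ.filter fun g : G => repFn A g = 2).card : ℝ)) ≤
      (1 / 2 : ℝ) * m + 3 * Real.sqrt (5 * m) := by
  subst hm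
  have hcount : (4 * #{g | repFn A g = 2} + 2 : ℝ) ≤ 2 * Fintype.card G + 8 * #A := by
    exact_mod_cast four_mul_card_repFn_eq_two_add_two_le A h
  have hA : (#A : ℝ) ≤ √(5 * Fintype.card G) :=
    Real.le_sqrt_of_sq_le (by exact_mod_cast card_sq_le_of_repFn_le A h)
  linarith [Real.sqrt_nonneg (5 * Fintype.card G : ℝ)]
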